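/- Let G be an abelian group of order 4t+2, D ⊆ G a k-subset with characteristic function χ : G → GF(2), and φ(x) = (-1)^{χ(x)}. Then the coboundary ∂φ is quasi-orthogonal if and only if φ is an optimal binary array, i.e., R_φ(g) = ±2 for all g ∈ G∖{0}. -/

import Mathlib

/-!
Since `∂φ(g, h) = φ(g) · φ(h) φ(g + h)` and `|φ(g)| = 1`, the `g`-th row sum of `M_{∂φ}` has
absolute value `|R_φ(g)|`. Writing `φ = 1 - 2ψ` with `ψ` the indicator of `D`, one gets
`R_φ(g) = |G| - 4|D| + 4|D ∩ (D - g)| ≡ |G| = 4t + 2 (mod 4)`, so every `|R_φ(g)|` is at least `2`.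
Hence the row excess, a sum of `4t + 1` such terms, equals `8t + 2` exactly when each is `2`.
-/

open Finset

section Autocorrelation

variable {G : Type*} [AddCommGroup G] [Fintype G]

def autocorrelation (φ : G → ℤ) (g : G) : ℤ := ∑ a, φ a * φ (a + g)

lemma abs_sum_coboundary_eq_abs_autocorrelation (φ : G → ℤ) (hφ : ∀ x, |φ x| = 1) (g : G) :
    |∑ h, φ g * φ h * φ (g + h)| = |autocorrelation φ g| := by
  have hrow : ∑ h, φ g * φ h * φ (g + h) = φ g * autocorrelation φ g := by
    rw [autocorrelation, mul_sum]
    exact sum_congr rfl fun h _ => by rw [add_comm g h, mul_assoc]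
  rw [hrow, abs_mul, hφ, one_mul]

lemma autocorrelation_one_sub_two_mul (ψ : G → ℤ) (g : G) :
    autocorrelation (fun x => 1 - 2 * ψ x) g
      = Fintype.card G - 4 * ∑ a, ψ a + 4 * ∑ a, ψ a * ψ (a + g) := by
  have hshift : ∑ a, ψ (a + g) = ∑ a, ψ a := Fintype.sum_equiv (Equiv.addRight g) _ _ fun _ => rfl
  have hexpand : ∀ a, (1 - 2 * ψ a) * (1 - 2 * ψ (a + g))
      = 1 - 2 * ψ a - 2 * ψ (a + g) + 4 * (ψ a * ψ (a + g)) := fun a => by ring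
  simp only [autocorrelation, hexpand, sum_add_distrib, sum_sub_distrib, ← mul_sum, hshift,
    sum_const, card_univ, nsmul_eq_mul, mul_one]
  ring

lemma autocorrelation_one_sub_two_mul_modEq_card (ψ : G → ℤ) (g : G) :
    autocorrelation (fun x => 1 - 2 * ψ x) g ≡ Fintype.card G [ZMOD 4] := by
  rw [autocorrelation_one_sub_two_mul, Int.modEq_iff_dvd]
  exact ⟨∑ a, ψ a - ∑ a, ψ a * ψ (a + g), by ring⟩

lemma two_le_abs_of_modEq_two {r : ℤ} (hr : r ≡ 2 [ZMOD 4]) : 2 ≤ |r| := by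
  rw [Int.ModEq] at hr
  rcases abs_cases r with ⟨h, _⟩ | ⟨h, _⟩ <;> omega

lemma neg_one_pow_val_eq_one_sub_two_mul (c : ZMod 2) : (-1 : ℤ) ^ c.val = 1 - 2 * (c.val : ℤ) := by
  fin_cases c <;> rfl

end Autocorrelation

theorem stmt_11_general (t : ℕ) (G : Type*) [AddCommGroup G]
    [Fintype G] [DecidableEq G] (hG : Fintype.card G = 4 * t + 2)
    (χ : G → ZMod 2)
    (φ : G → ℤ) (hφ : ∀ x, φ x = (-1 : ℤ) ^ (χ x).val) :
    (∑ g ∈ Finset.univ.erase (0 : G), |∑ h : G, φ g * φ h * φ (g + h)|)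
        = 8 * t + 2 ↔
      ∀ g : G, g ≠ 0 →
        (∑ a : G, φ a * φ (a + g)) = 2 ∨ (∑ a : G, φ a * φ (a + g)) = -2 := by
  have hunit : ∀ x, |φ x| = 1 := fun x => by rw [hφ, abs_neg_one_pow]
  have hmod : ∀ g, autocorrelation φ g ≡ 2 [ZMOD 4] := fun g => by
    have hφψ : φ = fun x => 1 - 2 * ((χ x).val : ℤ) :=
      funext fun x => by rw [hφ, neg_one_pow_val_eq_one_sub_two_mul]
    have hcard : ((Fintype.card G : ℕ) : ℤ) ≡ 2 [ZMOD 4] := by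
      rw [hG, Int.ModEq]; push_cast; omega
    exact hφψ ▸ (autocorrelation_one_sub_two_mul_modEq_card _ g).trans hcard
  have htarget : (8 * t + 2 : ℤ) = ∑ _g ∈ univ.erase (0 : G), 2 := by
    rw [sum_const, card_erase_of_mem (mem_univ 0), card_univ, hG, nsmul_eq_mul]
    push_cast; ring
  rw [sum_congr rfl fun g _ => abs_sum_coboundary_eq_abs_autocorrelation φ hunit g, htarget,
    eq_comm, sum_eq_sum_iff_of_le fun g _ => two_le_abs_of_modEq_two (hmod g)]
  simp only [mem_erase, mem_univ, and_true, eq_comm (a := (2 : ℤ)),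
    abs_eq (zero_le_two : (0 : ℤ) ≤ 2), autocorrelation]

/-- for `G` abelian of order `4t+2`, `D ⊆ G` a `k`-subset with
GF(2) characteristic function `χ` and `φ(x) = (-1)^{χ(x)}`, the coboundary
`∂φ` is quasi-orthogonal (row excess `8t+2`) iff `φ` is an optimal binary
array: `R_φ(g) = ±2` for all `g ≠ 0`. -/
theorem stmt_11 (t k : ℕ) (ht : 1 ≤ t) (G : Type*) [AddCommGroup G]
    [Fintype G] [DecidableEq G] (hG : Fintype.card G = 4 * t + 2)
    (χ : G → ZMod 2) (D : Finset G)
    (hD : D = Finset.univ.filter fun x => χ x = 1) (hk : D.card = k)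
    (φ : G → ℤ) (hφ : ∀ x, φ x = (-1 : ℤ) ^ (χ x).val) :
    (∑ g ∈ Finset.univ.erase (0 : G), |∑ h : G, φ g * φ h * φ (g + h)|)
        = 8 * t + 2 ↔
      ∀ g : G, g ≠ 0 →
        (∑ a : G, φ a * φ (a + g)) = 2 ∨ (∑ a : G, φ a * φ (a + g)) = -2 :=
  stmt_11_general t G hG χ φ hφ
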